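/- The maximal number of pairwise square-law distinct n-tuples drawn from an (n_r,n_p)-SQAM constellation (with distinct positive radii) equals ⌈(n_p+1)/2⌉^{n−1} · n_r^n; i.e., the number of square-law equivalence classes of K^n is ⌈(n_p+1)/2⌉^{n−1} · n_r^n, where K = {d·e^{iθ} : d ∈ D, θ ∈ Φ_{n_p}} with |D| = n_r. -/

import Mathlib

noncomputable def psi (a b : ℂ) : ℝ :=
  (1/4) * ‖a + b‖ ^ 2 + (1/8) * ‖a - b‖ ^ 2

/-- The `(n_r, n_p)`-SQAM constellation with radius set `D` and `np` phases. -/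
def sqamK (D : Finset ℝ) (np : ℕ) : Set ℂ :=
  {z | ∃ d ∈ D, ∃ m < np, z = (d : ℂ) * Complex.exp (((2 * Real.pi * m / np : ℝ) : ℂ) * Complex.I)}

/-- The signature `Υ(x) = (|x₀|², ψ(x₀,x₁), |x₁|², …, |x_{n−1}|²)` of an `n`-tuple. -/
noncomputable def sig {n : ℕ} (x : Fin n → ℂ) : Fin (2 * n - 1) → ℝ :=
  fun j =>
    if h : (j : ℕ) % 2 = 0 then
      ‖x ⟨(j : ℕ) / 2, by have := j.isLt; omega⟩‖ ^ 2
    else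
      psi (x ⟨(j : ℕ) / 2, by have := j.isLt; omega⟩)
          (x ⟨(j : ℕ) / 2 + 1, by have := j.isLt; omega⟩)

/- ========= auxiliary lemmas ========= -/

lemma cos_mod (np : ℕ) (hnp : 1 ≤ np) (u v : ℤ) (h : u % np = v % np) :
    Real.cos (2 * Real.pi * u / np) = Real.cos (2 * Real.pi * v / np) := by
  have hd : (np:ℤ) ∣ (u - v) := Int.ModEq.dvd (Int.ModEq.symm h)
  obtain ⟨t, ht⟩ := hd
  have hnp' : (np:ℝ) ≠ 0 := by positivity
  have huv : (u:ℝ) = (v:ℝ) + (np:ℝ) * (t:ℝ) := by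
    have h5 : (u:ℤ) = v + np * t := by omega
    exact_mod_cast congrArg (Int.cast : ℤ → ℝ) h5
  have h6 : (2 * Real.pi * u / np) = 2 * Real.pi * v / np + t * (2 * Real.pi) := by
    rw [huv]; field_simp
  rw [h6, Real.cos_add_int_mul_two_pi]

lemma cos_reduce (np : ℕ) (hnp : 1 ≤ np) (a b : ℕ) :
    ∃ k ≤ np / 2, Real.cos (2 * Real.pi * a / np - 2 * Real.pi * b / np)
      = Real.cos (2 * Real.pi * k / np) := by
  have hnpz : (np:ℤ) ≠ 0 := Int.natCast_ne_zero.mpr (by omega)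
  have hnp' : (np:ℝ) ≠ 0 := by positivity
  have h1 : (2 * Real.pi * a / np - 2 * Real.pi * b / np)
      = 2 * Real.pi * (((a:ℤ) - b : ℤ):ℝ) / np := by push_cast; field_simp
  have hr0 : 0 ≤ ((a:ℤ) - b) % np := Int.emod_nonneg _ hnpz
  have hrn : ((a:ℤ) - b) % np < np := Int.emod_lt_of_pos _ (by omega)
  have h2 : Real.cos (2 * Real.pi * (((a:ℤ) - b : ℤ):ℝ) / np)
      = Real.cos (2 * Real.pi * ((((a:ℤ) - b) % np : ℤ):ℝ) / np) :=
    cos_mod np hnp ((a:ℤ) - b) (((a:ℤ) - b) % np) (Int.emod_emod_of_dvd _ dvd_rfl).symm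
  set r : ℤ := ((a:ℤ) - b) % np with hr
  by_cases hc : r.toNat ≤ np / 2
  · refine ⟨r.toNat, hc, ?_⟩
    rw [h1, h2]
    have hcast : ((r.toNat:ℕ):ℝ) = (r:ℝ) := by exact_mod_cast Int.toNat_of_nonneg hr0
    rw [hcast]
  · refine ⟨np - r.toNat, by omega, ?_⟩
    rw [h1, h2]
    have hmod : r % (np:ℤ) = (-((np:ℤ) - r)) % np := by
      rw [neg_sub, Int.sub_emod, Int.emod_self, sub_zero, Int.emod_emod_of_dvd _ dvd_rfl]
      exact (Int.emod_emod_of_dvd _ dvd_rfl).symm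
    have h3 : Real.cos (2 * Real.pi * (r:ℝ) / np)
        = Real.cos (2 * Real.pi * ((-((np:ℤ) - r) : ℤ):ℝ) / np) :=
      cos_mod np hnp r (-((np:ℤ) - r)) hmod
    rw [h3]
    have h4 : (2 * Real.pi * ((-((np:ℤ) - r) : ℤ):ℝ) / np)
        = -(2 * Real.pi * ((((np:ℤ) - r):ℤ):ℝ) / np) := by push_cast; ring
    rw [h4, Real.cos_neg]
    have h5 : ((np - r.toNat : ℕ):ℤ) = (np:ℤ) - r := by omega
    have h6 : (((np:ℤ) - r : ℤ):ℝ) = ((np - r.toNat : ℕ):ℝ) := by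
      exact_mod_cast (congrArg (Int.cast : ℤ → ℝ) h5).symm
    rw [h6]

lemma cos_step (np : ℕ) (hnp : 1 ≤ np) (Ma kva : ℕ) :
    Real.cos (2 * Real.pi * Ma / np - 2 * Real.pi * (((Ma + kva) % np : ℕ) : ℝ) / np)
      = Real.cos (2 * Real.pi * kva / np) := by
  obtain ⟨w, hw⟩ : ∃ w, w = (Ma + kva) % np := ⟨_, rfl⟩
  rw [← hw]
  have hnp' : (np:ℝ) ≠ 0 := by positivity
  have hc : (w:ℤ) = ((Ma:ℤ) + kva) % np := by rw [hw]; push_cast; ring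
  have h1 : 2 * Real.pi * (Ma:ℝ) / np - 2 * Real.pi * (w : ℝ) / np
      = 2 * Real.pi * (((Ma:ℤ) - (w:ℤ) : ℤ):ℝ) / np := by
    push_cast; field_simp
  have hmod : ((Ma:ℤ) - (w:ℤ)) % np = (-(kva:ℤ)) % np := by
    rw [hc, Int.sub_emod, Int.emod_emod_of_dvd _ dvd_rfl, ← Int.sub_emod,
      show (Ma:ℤ) - ((Ma:ℤ) + kva) = -(kva:ℤ) by ring]
  rw [h1, cos_mod np hnp _ (-(kva:ℤ)) hmod]
  have h4 : 2 * Real.pi * (((-(kva:ℤ)):ℤ):ℝ) / np = -(2 * Real.pi * ((kva:ℕ):ℝ) / np) := by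
    push_cast; ring
  rw [h4, Real.cos_neg]

lemma psi_formula (d d' α β : ℝ) :
    psi ((d:ℂ) * Complex.exp ((α:ℂ) * Complex.I)) ((d':ℂ) * Complex.exp ((β:ℂ) * Complex.I))
      = 3/8 * (d^2 + d'^2) + 1/4 * d * d' * Real.cos (α - β) := by
  unfold psi
  simp only [Complex.sq_norm, Complex.normSq_apply, Complex.exp_ofReal_mul_I_re,
    Complex.exp_ofReal_mul_I_im, Complex.add_re, Complex.add_im, Complex.sub_re, Complex.sub_im,
    Complex.mul_re, Complex.mul_im, Complex.ofReal_re, Complex.ofReal_im, Real.cos_sub]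
  ring_nf
  nlinarith [Real.sin_sq_add_cos_sq α, Real.sin_sq_add_cos_sq β]

lemma complex_abs_sq (d α : ℝ) :
    ‖(d:ℂ) * Complex.exp ((α:ℂ) * Complex.I)‖ ^ 2 = d ^ 2 := by
  simp [Complex.norm_exp_ofReal_mul_I, sq_abs]

lemma ceil_half (np : ℕ) : ⌈((np : ℝ) + 1) / 2⌉₊ = np / 2 + 1 := by
  rcases Nat.even_or_odd np with ⟨t, ht⟩ | ⟨t, ht⟩ <;> subst ht
  · have h2 : (t + t) / 2 = t := by omega
    rw [h2, Nat.ceil_eq_iff (by omega)]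
    push_cast
    constructor <;> linarith
  · have h2 : (2 * t + 1) / 2 = t := by omega
    rw [h2, Nat.ceil_eq_iff (by omega)]
    push_cast
    constructor <;> linarith

/- ========= the parameterization ========= -/

noncomputable def Fmap (D : Finset ℝ) (np n : ℕ)
    (p : (Fin n → {d // d ∈ D}) × (Fin (n - 1) → Fin (np / 2 + 1))) :
    Fin (2 * n - 1) → ℝ :=
  fun j =>
    if h : (j : ℕ) % 2 = 0 then
      ((p.1 ⟨(j : ℕ) / 2, by have := j.isLt; omega⟩ : ℝ)) ^ 2
    else
      3/8 * (((p.1 ⟨(j : ℕ) / 2, by have := j.isLt; omega⟩ : ℝ)) ^ 2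
           + ((p.1 ⟨(j : ℕ) / 2 + 1, by have := j.isLt; omega⟩ : ℝ)) ^ 2)
      + 1/4 * ((p.1 ⟨(j : ℕ) / 2, by have := j.isLt; omega⟩ : ℝ))
            * ((p.1 ⟨(j : ℕ) / 2 + 1, by have := j.isLt; omega⟩ : ℝ))
            * Real.cos (2 * Real.pi *
                (((p.2 ⟨(j : ℕ) / 2, by have := j.isLt; omega⟩ : ℕ)) : ℝ) / np)

lemma Fmap_even (D : Finset ℝ) (np n : ℕ)
    (p : (Fin n → {d // d ∈ D}) × (Fin (n - 1) → Fin (np / 2 + 1)))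
    (i : Fin n) (h2 : 2 * (i:ℕ) < 2 * n - 1) :
    Fmap D np n p ⟨2 * (i:ℕ), h2⟩ = (p.1 i : ℝ) ^ 2 := by
  have hmk : ∀ (h : 2 * (i:ℕ) / 2 < n), (⟨2 * (i:ℕ) / 2, h⟩ : Fin n) = i := by
    intro h; apply Fin.ext; show 2 * (i:ℕ) / 2 = (i:ℕ); omega
  simp only [Fmap]
  rw [dif_pos (show 2 * (i:ℕ) % 2 = 0 by omega), hmk]

lemma Fmap_odd (D : Finset ℝ) (np n : ℕ)
    (p : (Fin n → {d // d ∈ D}) × (Fin (n - 1) → Fin (np / 2 + 1)))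
    (i : Fin (n - 1)) (h2 : 2 * (i:ℕ) + 1 < 2 * n - 1)
    (hi1 : (i:ℕ) < n) (hi2 : (i:ℕ) + 1 < n) :
    Fmap D np n p ⟨2 * (i:ℕ) + 1, h2⟩
      = 3/8 * ((p.1 ⟨(i:ℕ), hi1⟩ : ℝ) ^ 2 + (p.1 ⟨(i:ℕ) + 1, hi2⟩ : ℝ) ^ 2)
      + 1/4 * (p.1 ⟨(i:ℕ), hi1⟩ : ℝ) * (p.1 ⟨(i:ℕ) + 1, hi2⟩ : ℝ)
            * Real.cos (2 * Real.pi * ((p.2 i : ℕ) : ℝ) / np) := by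
  have hmk1 : ∀ (h : (2 * (i:ℕ) + 1) / 2 < n),
      (⟨(2 * (i:ℕ) + 1) / 2, h⟩ : Fin n) = ⟨(i:ℕ), hi1⟩ := by
    intro h; apply Fin.ext; show (2 * (i:ℕ) + 1) / 2 = (i:ℕ); omega
  have hmk2 : ∀ (h : (2 * (i:ℕ) + 1) / 2 + 1 < n),
      (⟨(2 * (i:ℕ) + 1) / 2 + 1, h⟩ : Fin n) = ⟨(i:ℕ) + 1, hi2⟩ := by
    intro h; apply Fin.ext; show (2 * (i:ℕ) + 1) / 2 + 1 = (i:ℕ) + 1; omega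
  have hmk3 : ∀ (h : (2 * (i:ℕ) + 1) / 2 < n - 1),
      (⟨(2 * (i:ℕ) + 1) / 2, h⟩ : Fin (n - 1)) = i := by
    intro h; apply Fin.ext; show (2 * (i:ℕ) + 1) / 2 = (i:ℕ); omega
  simp only [Fmap]
  rw [dif_neg (show ¬(2 * (i:ℕ) + 1) % 2 = 0 by omega), hmk1, hmk2, hmk3]

/-- The sequence of phase indices used to realize prescribed phase differences. -/
def phaseSeq (np : ℕ) (kv : ℕ → ℕ) : ℕ → ℕ
  | 0 => 0
  | i + 1 => (phaseSeq np kv i + kv i) % np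

lemma phaseSeq_lt (np : ℕ) (hnp : 1 ≤ np) (kv : ℕ → ℕ) (i : ℕ) :
    phaseSeq np kv i < np := by
  cases i with
  | zero => exact hnp
  | succ i => exact Nat.mod_lt _ (by omega)

theorem num_sq_equiv_classes (D : Finset ℝ) (hD : ∀ d ∈ D, 0 < d)
    (np n : ℕ) (hnp : 1 ≤ np) (hn : 1 ≤ n) :
    Set.ncard (sig '' {x : Fin n → ℂ | ∀ i, x i ∈ sqamK D np})
      = ⌈((np : ℝ) + 1) / 2⌉₊ ^ (n - 1) * D.card ^ n := by
  classical
  have hnp' : (np:ℝ) ≠ 0 := by positivity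
  have hrange : sig '' {x : Fin n → ℂ | ∀ i, x i ∈ sqamK D np}
      = Set.range (Fmap D np n) := by
    apply Set.Subset.antisymm
    · rintro _ ⟨x, hx, rfl⟩
      choose df hdf mf hmf hxf using hx
      have hcr := fun i : Fin (n - 1) =>
        cos_reduce np hnp (mf ⟨(i:ℕ), by have := i.isLt; omega⟩)
          (mf ⟨(i:ℕ) + 1, by have := i.isLt; omega⟩)
      choose kf hkf hcos using hcr
      refine ⟨(fun i => ⟨df i, hdf i⟩, fun i => ⟨kf i, by have := hkf i; omega⟩), ?_⟩
      funext j
      by_cases hpar : (j:ℕ) % 2 = 0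
      · simp only [sig, Fmap, dif_pos hpar]
        rw [hxf]
        exact (complex_abs_sq _ _).symm
      · simp only [sig, Fmap, dif_neg hpar]
        rw [hxf, hxf, psi_formula,
          hcos ⟨(j:ℕ)/2, by have := j.isLt; omega⟩]
    · rintro _ ⟨⟨d, k⟩, rfl⟩
      set kv : ℕ → ℕ := fun i => if h : i < n - 1 then (k ⟨i, h⟩ : ℕ) else 0 with hkv
      set x : Fin n → ℂ := fun i =>
        ((d i : ℝ) : ℂ) *
          Complex.exp (((2 * Real.pi * (phaseSeq np kv (i:ℕ)) / np : ℝ) : ℂ) * Complex.I)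
        with hxdef
      refine ⟨x, fun i => ⟨(d i : ℝ), (d i).2, phaseSeq np kv (i:ℕ),
        phaseSeq_lt np hnp kv (i:ℕ), rfl⟩, ?_⟩
      funext j
      by_cases hpar : (j:ℕ) % 2 = 0
      · simp only [sig, Fmap, dif_pos hpar, hxdef]
        exact complex_abs_sq _ _
      · simp only [sig, Fmap, dif_neg hpar, hxdef]
        have hstep : phaseSeq np kv ((j:ℕ)/2 + 1)
            = (phaseSeq np kv ((j:ℕ)/2) + kv ((j:ℕ)/2)) % np := rfl
        have hkveq : kv ((j:ℕ)/2) = (k ⟨(j:ℕ)/2, by have := j.isLt; omega⟩ : ℕ) := by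
          rw [hkv]; exact dif_pos (by have := j.isLt; omega)
        rw [psi_formula, hstep, hkveq, cos_step np hnp]
  rw [hrange]
  have hinj : Function.Injective (Fmap D np n) := by
    rintro ⟨d, k⟩ ⟨d', k'⟩ h
    have hdpos : ∀ i : Fin n, (0:ℝ) < (d i : ℝ) := fun i => hD _ (d i).2
    have hdpos' : ∀ i : Fin n, (0:ℝ) < (d' i : ℝ) := fun i => hD _ (d' i).2
    have hd : d = d' := by
      funext i
      have h2 : 2 * (i:ℕ) < 2 * n - 1 := by have := i.isLt; omega
      have he := congrFun h ⟨2 * (i:ℕ), h2⟩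
      rw [Fmap_even D np n ⟨d, k⟩ i h2, Fmap_even D np n ⟨d', k'⟩ i h2] at he
      have : (d i : ℝ) = (d' i : ℝ) := by nlinarith [hdpos i, hdpos' i]
      exact Subtype.ext this
    subst hd
    have hk : k = k' := by
      funext i
      have hi1 : (i:ℕ) < n := by have := i.isLt; omega
      have hi2 : (i:ℕ) + 1 < n := by have := i.isLt; omega
      have h2 : 2 * (i:ℕ) + 1 < 2 * n - 1 := by have := i.isLt; omega
      have ho := congrFun h ⟨2 * (i:ℕ) + 1, h2⟩
      rw [Fmap_odd D np n ⟨d, k⟩ i h2 hi1 hi2, Fmap_odd D np n ⟨d, k'⟩ i h2 hi1 hi2] at ho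
      have hB : (0:ℝ) < 1/4 * (d ⟨(i:ℕ), hi1⟩ : ℝ) * (d ⟨(i:ℕ)+1, hi2⟩ : ℝ) := by
        have hb1 := hdpos ⟨(i:ℕ), hi1⟩; have hb2 := hdpos ⟨(i:ℕ)+1, hi2⟩; positivity
      have hcos : Real.cos (2 * Real.pi * ((k i : ℕ) : ℝ) / np)
          = Real.cos (2 * Real.pi * ((k' i : ℕ) : ℝ) / np) :=
        mul_left_cancel₀ (ne_of_gt hB) (add_left_cancel ho)
      have hmem : ∀ (m : Fin (np / 2 + 1)),
          2 * Real.pi * ((m : ℕ) : ℝ) / np ∈ Set.Icc 0 Real.pi := by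
        intro m
        constructor
        · positivity
        · rw [div_le_iff₀ (by positivity)]
          have hm : ((m : ℕ) : ℝ) ≤ (np : ℝ) / 2 := by
            have h4 : (m : ℕ) ≤ np / 2 := by have := m.isLt; omega
            have h5 : ((m : ℕ) : ℝ) ≤ ((np / 2 : ℕ) : ℝ) := by exact_mod_cast h4
            refine h5.trans ?_
            have h6 : (np / 2 : ℕ) * 2 ≤ np := by omega
            have h7 : (((np / 2 : ℕ)) : ℝ) * 2 ≤ (np : ℝ) := by exact_mod_cast h6
            linarith
          nlinarith [Real.pi_pos]
      have hang := Real.injOn_cos (hmem (k i)) (hmem (k' i)) hcos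
      have hco : (2 * Real.pi / np) ≠ 0 := by positivity
      have h9 : (2 * Real.pi / np) * ((k i : ℕ) : ℝ) = (2 * Real.pi / np) * ((k' i : ℕ) : ℝ) := by
        linear_combination hang
      have h10 : ((k i : ℕ) : ℝ) = ((k' i : ℕ) : ℝ) := mul_left_cancel₀ hco h9
      exact Fin.ext (Nat.cast_injective h10)
    rw [hk]
  rw [← Nat.card_coe_set_eq, Nat.card_range_of_injective hinj, Nat.card_eq_fintype_card]
  rw [Fintype.card_prod, Fintype.card_fun, Fintype.card_fun, Fintype.card_coe,
    Fintype.card_fin, Fintype.card_fin, Fintype.card_fin, ceil_half]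
  ring
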